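/- For every integer k ≥ 1 and every real r, the 2k-fold application of (1/sinh r)·(d/dr) to sinh^{4k+1} r equals ((4k+1)!! / (2k+1)) · sinh((2k+1) r). -/

import Mathlib

open Finset



/-- Product (4k+1)(4k-1)...(4k+3-2i). -/
def Pch (k i : ℕ) : ℕ := ∏ t ∈ Finset.range i, (4*k+1 - 2*t)

lemma Pch_fact (k : ℕ) : ∀ i, i ≤ 2*k →
    Pch k i * (4*k+1-2*i).factorial * 2^i * (2*k).factorial
      = (4*k+1).factorial * (2*k-i).factorial := by
  intro i
  induction i with
  | zero => simp [Pch]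
  | succ i ih =>
    intro hi
    have IH := ih (by omega)
    set A := 4*k+1-2*(i+1) with hA
    set B := 2*k-(i+1) with hB
    have h1 : 4*k+1-2*i = A + 2 := by omega
    have h2 : 2*k-i = B + 1 := by omega
    rw [h1, h2] at IH
    have hP : Pch k (i+1) = Pch k i * (A+2) := by
      rw [Pch, Finset.prod_range_succ, ← Pch, h1]
    have e1 : (A+2).factorial = (A+2)*((A+1)*A.factorial) := by
      rw [Nat.factorial_succ, Nat.factorial_succ]
    have e2 : (B+1).factorial = (B+1)*B.factorial := Nat.factorial_succ B
    have hA1 : A+1 = 2*(B+1) := by omega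
    rw [e1, e2, hA1] at IH
    have hpos : 0 < B + 1 := by omega
    apply Nat.eq_of_mul_eq_mul_left hpos
    rw [hP]
    zify at IH ⊢
    linear_combination IH




lemma NL (k i : ℕ) (hi : i ≤ 2*k) :
    2*(2*(k:ℝ)+1) * (Nat.choose (2*k) i : ℝ) * (Pch k i : ℝ) * (Pch k (2*k-i) : ℝ)
      = ((4*k+1).doubleFactorial : ℝ) * (Nat.choose (4*k+2) (2*i+1) : ℝ) := by
  have e1 := Pch_fact k i hi
  have e2 := Pch_fact k (2*k-i) (by omega)
  rw [show 4*k+1-2*(2*k-i) = 2*i+1 by omega, show 2*k-(2*k-i) = i by omega] at e2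
  have c1 := Nat.choose_mul_factorial_mul_factorial hi
  have c2 := Nat.choose_mul_factorial_mul_factorial (show 2*i+1 ≤ 4*k+2 by omega)
  rw [show 4*k+2-(2*i+1) = 4*k+1-2*i by omega] at c2
  have d1 : ((4*k+2).factorial : ℕ) = (4*k+2).doubleFactorial * (4*k+1).doubleFactorial := by
    have := Nat.factorial_eq_mul_doubleFactorial (4*k+1)
    simpa using this
  have d2 : (4*k+2).doubleFactorial = 2^(2*k+1) * (2*k+1).factorial := by
    have := Nat.doubleFactorial_two_mul (2*k+1)
    rw [show 2*(2*k+1) = 4*k+2 by omega] at this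
    exact this
  have d3 : (4*k+2).factorial = (4*k+2) * (4*k+1).factorial := rfl
  have d4 : (2*k+1).factorial = (2*k+1) * (2*k).factorial := rfl
  -- cast everything to ℝ
  have E1 : (Pch k i : ℝ) * (4*k+1-2*i).factorial * 2^i * (2*k).factorial
      = (4*k+1).factorial * (2*k-i).factorial := by exact_mod_cast congrArg (Nat.cast (R := ℝ)) e1
  have E2 : (Pch k (2*k-i) : ℝ) * (2*i+1).factorial * 2^(2*k-i) * (2*k).factorial
      = (4*k+1).factorial * (i).factorial := by exact_mod_cast congrArg (Nat.cast (R := ℝ)) e2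
  have C1 : ((2*k).choose i : ℝ) * (i).factorial * (2*k-i).factorial = (2*k).factorial := by
    exact_mod_cast congrArg (Nat.cast (R := ℝ)) c1
  have C2 : ((4*k+2).choose (2*i+1) : ℝ) * (2*i+1).factorial * (4*k+1-2*i).factorial
      = (4*k+2).factorial := by exact_mod_cast congrArg (Nat.cast (R := ℝ)) c2
  have D : ((4*k+2):ℝ) * (4*k+1).factorial
      = (2^(2*k+1) * ((2*k+1) * (2*k).factorial)) * (4*k+1).doubleFactorial := by
    have : ((4*k+2).factorial : ℝ) = (2^(2*k+1) * (2*k+1).factorial) * (4*k+1).doubleFactorial := by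
      exact_mod_cast congrArg (Nat.cast (R := ℝ)) (d1.trans (by rw [d2]))
    rw [d3, d4] at this
    exact_mod_cast this
  -- nonzeroness
  have f1 : ((4*k+1-2*i).factorial : ℝ) ≠ 0 := by positivity
  have f2 : ((2*i+1).factorial : ℝ) ≠ 0 := by positivity
  have f3 : ((2*k).factorial : ℝ) ≠ 0 := by positivity
  have f4 : ((i).factorial : ℝ) ≠ 0 := by positivity
  have f5 : ((2*k-i).factorial : ℝ) ≠ 0 := by positivity
  have f6 : (2:ℝ)^i ≠ 0 := by positivity
  have f7 : (2:ℝ)^(2*k-i) ≠ 0 := by positivity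
  have hPi : (Pch k i : ℝ) = (4*k+1).factorial * (2*k-i).factorial
      / ((4*k+1-2*i).factorial * 2^i * (2*k).factorial) := by
    field_simp; linear_combination E1
  have hPj : (Pch k (2*k-i) : ℝ) = (4*k+1).factorial * (i).factorial
      / ((2*i+1).factorial * 2^(2*k-i) * (2*k).factorial) := by
    field_simp; linear_combination E2
  have hC1 : ((2*k).choose i : ℝ) = (2*k).factorial / ((i).factorial * (2*k-i).factorial) := by
    field_simp; linear_combination C1
  have hC2 : ((4*k+2).choose (2*i+1) : ℝ)
      = (4*k+2).factorial / ((2*i+1).factorial * (4*k+1-2*i).factorial) := by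
    field_simp; linear_combination C2
  have hDF : ((4*k+1).doubleFactorial : ℝ)
      = ((4*k+2):ℝ) * (4*k+1).factorial / (2^(2*k+1) * ((2*k+1) * (2*k).factorial)) := by
    rw [eq_div_iff (by positivity)]; linear_combination -D
  rw [hPi, hPj, hC1, hC2, hDF, d3]
  have hpow : (2:ℝ)^i * 2^(2*k-i) = 2^(2*k) := by
    rw [← pow_add]; congr 1; omega
  have hpow2 : (2:ℝ)^(2*k+1) = 2 * (2^i * 2^(2*k-i)) := by rw [hpow, pow_succ]; ring
  push_cast
  rw [hpow2]
  field_simp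
  ring


lemma sum_split (M : ℕ) (f : ℕ → ℝ) :
    ∑ j ∈ Finset.range (2*M), f j
      = ∑ i ∈ Finset.range M, f (2*i) + ∑ i ∈ Finset.range M, f (2*i+1) := by
  induction M with
  | zero => simp
  | succ M ih =>
    rw [show 2*(M+1) = (2*M+1)+1 by omega, Finset.sum_range_succ, Finset.sum_range_succ,
      Finset.sum_range_succ, Finset.sum_range_succ, ih]
    ring

lemma pascal_regroup (m : ℕ) (T : ℕ → ℝ) :
    ∑ j ∈ Finset.range (m+2), (Nat.choose (m+1) j : ℝ) * T j
      = ∑ i ∈ Finset.range (m+1), (Nat.choose m i : ℝ) * T (i+1)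
        + ∑ i ∈ Finset.range (m+1), (Nat.choose m i : ℝ) * T i := by
  rw [Finset.sum_range_succ' (fun j => (Nat.choose (m+1) j : ℝ) * T j) (m+1)]
  have h2 : ∑ i ∈ Finset.range (m+1), (Nat.choose (m+1) (i+1) : ℝ) * T (i+1)
      = ∑ i ∈ Finset.range (m+1),
          ((Nat.choose m i : ℝ) * T (i+1) + (Nat.choose m (i+1) : ℝ) * T (i+1)) := by
    apply Finset.sum_congr rfl; intro i _
    have h1 : (Nat.choose (m+1) (i+1) : ℝ) = Nat.choose m i + Nat.choose m (i+1) := by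
      exact_mod_cast congrArg (Nat.cast (R := ℝ)) (Nat.choose_succ_succ m i)
    rw [h1]; ring
  rw [h2, Finset.sum_add_distrib]
  have h3 : (∑ i ∈ Finset.range (m+1), (Nat.choose m (i+1) : ℝ) * T (i+1))
      + (Nat.choose (m+1) 0 : ℝ) * T 0
      = ∑ i ∈ Finset.range (m+1), (Nat.choose m i : ℝ) * T i := by
    rw [show ((Nat.choose (m+1) 0 : ℝ)) = ((Nat.choose m 0 : ℝ)) by simp]
    rw [← Finset.sum_range_succ' (fun j => (Nat.choose m j : ℝ) * T j) (m+1),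
      Finset.sum_range_succ]
    simp
  rw [add_assoc, h3]



lemma sinh_expand (k : ℕ) (r : ℝ) :
    Real.sinh ((2*(k:ℝ)+1) * r)
      = ∑ i ∈ Finset.range (2*k+1),
          (Nat.choose (4*k+2) (2*i+1) : ℝ)
            * Real.cosh (r/2) ^ (2*i+1) * Real.sinh (r/2) ^ (4*k+1-2*i) := by
  set c := Real.cosh (r/2) with hc
  set s := Real.sinh (r/2) with hs
  have h1 : Real.sinh ((2*(k:ℝ)+1) * r) = ((c+s)^(4*k+2) - (c-s)^(4*k+2)) / 2 := by
    rw [Real.sinh_eq]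
    have e1 : (2*(k:ℝ)+1) * r = (4*k+2 : ℕ) * (r/2) := by push_cast; ring
    have e2 : -(((4*k+2 : ℕ) :ℝ) * (r/2)) = (4*k+2 : ℕ) * (-(r/2)) := by push_cast; ring
    rw [e1, e2, Real.exp_nat_mul, Real.exp_nat_mul, Real.cosh_add_sinh]
    rw [show Real.exp (-(r/2)) = c - s from (Real.cosh_sub_sinh (r/2)).symm]
  have h2 : (c+s)^(4*k+2) - (c-s)^(4*k+2)
      = ∑ j ∈ Finset.range (4*k+3),
          (Nat.choose (4*k+2) j : ℝ) * c^j * (s^(4*k+2-j) - (-s)^(4*k+2-j)) := by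
    rw [show c - s = c + (-s) by ring, add_pow, add_pow, ← Finset.sum_sub_distrib]
    apply Finset.sum_congr rfl; intro j _; ring
  rw [h1, h2]
  rw [show 4*k+3 = 2*(2*k+1)+1 by omega, Finset.sum_range_succ,
    sum_split (2*k+1) (fun j => (Nat.choose (4*k+2) j : ℝ) * c^j * (s^(4*k+2-j) - (-s)^(4*k+2-j)))]
  have hev : ∀ i ∈ Finset.range (2*k+1),
      (Nat.choose (4*k+2) (2*i) : ℝ) * c^(2*i) * (s^(4*k+2-2*i) - (-s)^(4*k+2-2*i)) = 0 := by
    intro i hi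
    rw [Finset.mem_range] at hi
    rw [Even.neg_pow (by refine ⟨2*k+1-i, by omega⟩)]
    ring
  have hlast : (Nat.choose (4*k+2) (2*(2*k+1)) : ℝ) * c^(2*(2*k+1))
      * (s^(4*k+2-2*(2*k+1)) - (-s)^(4*k+2-2*(2*k+1))) = 0 := by
    rw [show 4*k+2-2*(2*k+1) = 0 by omega]; simp
  rw [Finset.sum_eq_zero hev, hlast]
  have hodd : ∀ i ∈ Finset.range (2*k+1),
      (Nat.choose (4*k+2) (2*i+1) : ℝ) * c^(2*i+1) * (s^(4*k+2-(2*i+1)) - (-s)^(4*k+2-(2*i+1)))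
      = 2 * ((Nat.choose (4*k+2) (2*i+1) : ℝ) * c^(2*i+1) * s^(4*k+1-2*i)) := by
    intro i hi
    rw [Finset.mem_range] at hi
    rw [show 4*k+2-(2*i+1) = 4*k+1-2*i by omega,
      Odd.neg_pow (by refine ⟨2*k-i, by omega⟩)]
    ring
  rw [Finset.sum_congr rfl hodd, ← Finset.mul_sum]
  ring




noncomputable def Gcl (k m : ℕ) : ℝ → ℝ := fun x =>
  (2:ℝ)^(4*k+1) / 4^m * ∑ i ∈ Finset.range (m+1),
    (Nat.choose m i : ℝ) * Pch k i * Pch k (m-i)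
      * Real.sinh (x/2) ^ (4*k+1-2*i) * Real.cosh (x/2) ^ (4*k+1-2*(m-i))

lemma master (k : ℕ) : ∀ m, m ≤ 2*k → ∀ r : ℝ, Real.sinh r ≠ 0 →
    (fun f : ℝ → ℝ => fun x => deriv f x / Real.sinh x)^[m]
      (fun x => Real.sinh x ^ (4*k+1)) r = Gcl k m r := by
  intro m
  induction m with
  | zero =>
    intro _ r hr
    have hs : Real.sinh r = 2 * Real.sinh (r/2) * Real.cosh (r/2) := by
      rw [← Real.sinh_two_mul]; ring_nf
    rw [Function.iterate_zero, id_eq]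
    simp only [Gcl, zero_add, Finset.sum_range_one, Nat.sub_self, Nat.choose_self,
      Nat.cast_one, Nat.mul_zero, Nat.sub_zero, Pch, Finset.range_zero, Finset.prod_empty,
      mul_zero, pow_zero]
    rw [hs, mul_pow, mul_pow]
    push_cast
    ring
  | succ m ih =>
    intro hm r hr
    have hm' : m ≤ 2*k := by omega
    have h2 : HasDerivAt (fun x : ℝ => x/2) (1/2) r := (hasDerivAt_id r).div_const 2
    have hsd : HasDerivAt (fun x => Real.sinh (x/2)) (Real.cosh (r/2) * (1/2)) r :=
      h2.sinh
    have hcd : HasDerivAt (fun x => Real.cosh (x/2)) (Real.sinh (r/2) * (1/2)) r :=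
      h2.cosh
    set s := Real.sinh (r/2) with hsdef
    set c := Real.cosh (r/2) with hcdef
    have hterm : ∀ i ∈ Finset.range (m+1),
        HasDerivAt (fun x => (Nat.choose m i : ℝ) * Pch k i * Pch k (m-i)
            * Real.sinh (x/2) ^ (4*k+1-2*i) * Real.cosh (x/2) ^ (4*k+1-2*(m-i)))
          ((Nat.choose m i : ℝ) * Pch k i * Pch k (m-i) *
            (((4*k+1-2*i : ℕ) * s ^ (4*k+1-2*i-1) * (c * (1/2))) * c ^ (4*k+1-2*(m-i))
              + s ^ (4*k+1-2*i) * ((4*k+1-2*(m-i) : ℕ) * c ^ (4*k+1-2*(m-i)-1) * (s * (1/2))))) r := by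
      intro i _
      have h5 := ((hsd.pow (4*k+1-2*i)).mul (hcd.pow (4*k+1-2*(m-i)))).const_mul
        ((Nat.choose m i : ℝ) * Pch k i * Pch k (m-i))
      refine (h5.congr_of_eventuallyEq (Filter.Eventually.of_forall fun x => ?_)).congr_deriv ?_
      · simp only [Pi.pow_apply, Pi.mul_apply]; ring
      · rfl
    have hG : HasDerivAt (Gcl k m)
        ((2:ℝ)^(4*k+1) / 4^m * ∑ i ∈ Finset.range (m+1),
          ((Nat.choose m i : ℝ) * Pch k i * Pch k (m-i) *
            (((4*k+1-2*i : ℕ) * s ^ (4*k+1-2*i-1) * (c * (1/2))) * c ^ (4*k+1-2*(m-i))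
              + s ^ (4*k+1-2*i) * ((4*k+1-2*(m-i) : ℕ) * c ^ (4*k+1-2*(m-i)-1) * (s * (1/2)))))) r := by
      exact (HasDerivAt.fun_sum hterm).const_mul _
    have hU : IsOpen {x : ℝ | Real.sinh x ≠ 0} :=
      isOpen_compl_singleton.preimage Real.continuous_sinh
    have hev : (fun f : ℝ → ℝ => fun x => deriv f x / Real.sinh x)^[m]
        (fun x => Real.sinh x ^ (4*k+1)) =ᶠ[nhds r] Gcl k m := by
      filter_upwards [hU.mem_nhds hr] with x hx
      exact ih hm' x hx
    rw [Function.iterate_succ_apply']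
    have hde : deriv ((fun f : ℝ → ℝ => fun x => deriv f x / Real.sinh x)^[m]
        (fun x => Real.sinh x ^ (4*k+1))) r = deriv (Gcl k m) r := hev.deriv_eq
    show deriv ((fun f : ℝ → ℝ => fun x => deriv f x / Real.sinh x)^[m]
        (fun x => Real.sinh x ^ (4*k+1))) r / Real.sinh r = Gcl k (m+1) r
    rw [hde, hG.deriv]
    have hs2 : Real.sinh r = 2 * s * c := by
      rw [hsdef, hcdef, ← Real.sinh_two_mul]; ring_nf
    have hrne : r ≠ 0 := by rwa [Real.sinh_ne_zero] at hr
    have hsne : s ≠ 0 := by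
      rw [hsdef, Real.sinh_ne_zero]; intro h; apply hrne; linarith
    have hcne : c ≠ 0 := ne_of_gt (Real.cosh_pos _)
    rw [div_eq_iff hr, hs2]
    simp only [Gcl, ← hsdef, ← hcdef]
    rw [show m+1+1 = m+2 from rfl]
    rw [show (∑ i ∈ Finset.range (m+2), (Nat.choose (m+1) i : ℝ) * Pch k i * Pch k (m+1-i)
          * s ^ (4*k+1-2*i) * c ^ (4*k+1-2*(m+1-i)))
        = ∑ j ∈ Finset.range (m+2), (Nat.choose (m+1) j : ℝ)
            * ((Pch k j : ℝ) * Pch k (m+1-j) * s ^ (4*k+1-2*j) * c ^ (4*k+1-2*(m+1-j)))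
      from Finset.sum_congr rfl fun i _ => by ring]
    rw [pascal_regroup m (fun j => (Pch k j : ℝ) * Pch k (m+1-j)
      * s ^ (4*k+1-2*j) * c ^ (4*k+1-2*(m+1-j)))]
    rw [← Finset.sum_add_distrib]
    simp only [Finset.mul_sum, Finset.sum_mul]
    apply Finset.sum_congr rfl
    intro i hi
    rw [Finset.mem_range] at hi
    -- abbreviations
    obtain ⟨A, hA⟩ : ∃ A, 4*k+1-2*i = A+2 := ⟨4*k-1-2*i, by omega⟩
    obtain ⟨B, hB⟩ : ∃ B, 4*k+1-2*(m-i) = B+2 := ⟨4*k-1-2*(m-i), by omega⟩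
    have hPs : (Pch k (i+1) : ℝ) = (Pch k i : ℝ) * (A+2) := by
      rw [Pch, Finset.prod_range_succ, ← Pch]
      push_cast [hA.symm]
      rw [hA]; push_cast; ring
    have hPc : (Pch k (m+1-i) : ℝ) = (Pch k (m-i) : ℝ) * (B+2) := by
      rw [show m+1-i = (m-i)+1 by omega, Pch, Finset.prod_range_succ, ← Pch]
      rw [show 4*k+1-2*(m-i) = B+2 from hB]; push_cast; ring
    rw [show 4*k+1-2*(i+1) = A by omega, show m+1-(i+1) = m-i by omega,
      show 4*k+1-2*(m+1-i) = B by omega]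
    rw [hA, hB, hPs, hPc]
    rw [show A+2-1 = A+1 from rfl, show B+2-1 = B+1 from rfl]
    push_cast
    ring

/-- For k ≥ 1 and every real r, the 2k-fold application of
L f r = f'(r)/sinh r to sinh^{4k+1} r equals ((4k+1)!!/(2k+1)) sinh((2k+1)r). -/
theorem stmt_4 (k : ℕ) (hk : 1 ≤ k) (r : ℝ) :
    (fun f : ℝ → ℝ => fun x => deriv f x / Real.sinh x)^[2 * k]
        (fun x => Real.sinh x ^ (4 * k + 1)) r =
      ((4 * k + 1).doubleFactorial : ℝ) / (2 * k + 1) *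
        Real.sinh ((2 * k + 1) * r) := by
  by_cases hr : Real.sinh r = 0
  · -- r = 0 case
    have hr0 : r = 0 := by rwa [Real.sinh_eq_zero] at hr
    obtain ⟨j, rfl⟩ : ∃ j, k = j + 1 := ⟨k - 1, by omega⟩
    rw [show 2 * (j+1) = (2*j+1) + 1 by omega, Function.iterate_succ_apply']
    show deriv _ r / Real.sinh r = _
    rw [hr, div_zero, hr0]
    norm_num
  · have h := master k (2*k) le_rfl r hr
    rw [h, Gcl]
    rw [sinh_expand k r]
    set s := Real.sinh (r/2) with hsdef
    set c := Real.cosh (r/2) with hcdef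
    rw [show (∑ i ∈ Finset.range (2*k+1), (Nat.choose (2*k) i : ℝ) * Pch k i * Pch k (2*k-i)
          * s ^ (4*k+1-2*i) * c ^ (4*k+1-2*(2*k-i)))
        = ∑ i ∈ Finset.range (2*k+1), (Nat.choose (2*k) i : ℝ) * Pch k i * Pch k (2*k-i)
          * s ^ (4*k+1-2*i) * c ^ (2*i+1) from
      Finset.sum_congr rfl fun i hi => by
        rw [Finset.mem_range] at hi
        rw [show 4*k+1-2*(2*k-i) = 2*i+1 by omega]]
    simp only [Finset.mul_sum]
    apply Finset.sum_congr rfl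
    intro i hi
    rw [Finset.mem_range] at hi
    have hnl := NL k i (by omega)
    have h4 : (4:ℝ)^(2*k) = 2^(4*k) := by
      rw [show (4:ℝ) = 2^2 by norm_num, ← pow_mul, show 2*(2*k) = 4*k by omega]
    have h2k1 : (2*(k:ℝ)+1) ≠ 0 := by positivity
    rw [h4]
    field_simp
    linear_combination (2:ℝ)^(4*k) * s ^ (4*k+1-2*i) * c ^ (2*i+1) * hnl
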